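/- Let A = diag(1, 2·2^{1/3}) and let Y be the 2×2 matrix [[4, 3·2^{1/4} + 6·2^{3/4}], [3·2^{1/4} + 6·2^{3/4}, 32]]. Then Y is not positive semidefinite, yet the 2×2 matrix X = [[4/3, c], [c, 4·2^{1/3}/3]], where c = (3·2^{1/4} + 6·2^{3/4})/(1 + 2·2^{1/3} + 4·2^{2/3}), satisfies the matrix equation A^{2} X + A X A + X A^{2} = Y and X is Hermitian positive definite. -/

import Mathlib

/-!
A Hermitian 2×2 matrix is positive definite exactly when its determinant and trace are positive,
and positive semidefiniteness forces a nonnegative determinant. With `s = 2^{1/4}` one has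
`det Y = 128 - d² = -56 - 81 s² < 0`. With `r = 2^{1/3}` the identity
`(2r - 1)(1 + 2r + 4r²) = 8r³ - 1 = 15` gives `c = d (2r - 1) / 15`, and crude bounds on `r` and `s`
show `det X = 16r/9 - c² > 0`. For a diagonal `A = diag a`, the map `X ↦ A²X + AXA + XA²` multiplies
the `(i, j)` entry by `a_i² + a_i a_j + a_j²`, so the matrix equation reduces to three scalar
identities.
-/

open scoped ComplexOrder

/-- The matrix `A = diag(1, 2·2^{1/3})`. -/
noncomputable def A13 : Matrix (Fin 2) (Fin 2) ℂ :=
  Matrix.diagonal ![1, (((2 * (2 : ℝ) ^ ((1 : ℝ) / 3)) : ℝ) : ℂ)]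

/-- The off-diagonal entry `3·2^{1/4} + 6·2^{3/4}` of `Y`. -/
noncomputable def d13 : ℝ := 3 * (2 : ℝ) ^ ((1 : ℝ) / 4) + 6 * (2 : ℝ) ^ ((3 : ℝ) / 4)

/-- The matrix `Y = [[4, 3·2^{1/4} + 6·2^{3/4}], [3·2^{1/4} + 6·2^{3/4}, 32]]`. -/
noncomputable def Y13 : Matrix (Fin 2) (Fin 2) ℂ :=
  !![(4 : ℂ), (d13 : ℂ); (d13 : ℂ), (32 : ℂ)]

/-- The off-diagonal entry `c = (3·2^{1/4} + 6·2^{3/4}) / (1 + 2·2^{1/3} + 4·2^{2/3})`. -/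
noncomputable def c13 : ℝ :=
  d13 / (1 + 2 * (2 : ℝ) ^ ((1 : ℝ) / 3) + 4 * (2 : ℝ) ^ ((2 : ℝ) / 3))

/-- The matrix `X = [[4/3, c], [c, 4·2^{1/3}/3]]`. -/
noncomputable def X13 : Matrix (Fin 2) (Fin 2) ℂ :=
  !![((4 : ℝ) / 3 : ℂ), (c13 : ℂ); (c13 : ℂ), (((4 * (2 : ℝ) ^ ((1 : ℝ) / 3) / 3) : ℝ) : ℂ)]

namespace Matrix

theorem IsHermitian.posDef_of_det_pos_of_trace_pos {𝕜 : Type*} [RCLike 𝕜]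
    {M : Matrix (Fin 2) (Fin 2) 𝕜} (hM : M.IsHermitian) (hdet : 0 < M.det) (htr : 0 < M.trace) :
    M.PosDef := by
  rw [hM.det_eq_prod_eigenvalues, Fin.prod_univ_two, ← RCLike.ofReal_mul, RCLike.ofReal_pos]
    at hdet
  rw [hM.trace_eq_sum_eigenvalues, Fin.sum_univ_two, ← RCLike.ofReal_add, RCLike.ofReal_pos]
    at htr
  rw [hM.posDef_iff_eigenvalues_pos, Fin.forall_fin_two]
  rcases pos_and_pos_or_neg_and_neg_of_mul_pos hdet with h | h
  · exact h
  · linarith [h.1, h.2]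

theorem diagonal_sq_mul_add_mul_mul_add_mul_diagonal_sq_apply {n R : Type*} [Fintype n]
    [DecidableEq n] [CommSemiring R] (a : n → R) (X : Matrix n n R) (i j : n) :
    (diagonal a ^ 2 * X + diagonal a * X * diagonal a + X * diagonal a ^ 2) i j =
      (a i ^ 2 + a i * a j + a j ^ 2) * X i j := by
  simp only [sq, diagonal_mul_diagonal, add_apply, diagonal_mul, mul_diagonal]
  ring

end Matrix

lemma two_rpow_one_third_pow_three : ((2 : ℝ) ^ ((1 : ℝ) / 3)) ^ 3 = 2 := by
  rw [← Real.rpow_natCast, ← Real.rpow_mul zero_le_two]; norm_num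

lemma two_rpow_two_thirds : (2 : ℝ) ^ ((2 : ℝ) / 3) = ((2 : ℝ) ^ ((1 : ℝ) / 3)) ^ 2 := by
  rw [← Real.rpow_natCast, ← Real.rpow_mul zero_le_two]; norm_num

lemma two_rpow_one_fourth_pow_four : ((2 : ℝ) ^ ((1 : ℝ) / 4)) ^ 4 = 2 := by
  rw [← Real.rpow_natCast, ← Real.rpow_mul zero_le_two]; norm_num

lemma two_rpow_three_fourths : (2 : ℝ) ^ ((3 : ℝ) / 4) = ((2 : ℝ) ^ ((1 : ℝ) / 4)) ^ 3 := by
  rw [← Real.rpow_natCast, ← Real.rpow_mul zero_le_two]; norm_num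

lemma d13_sq : d13 ^ 2 = 72 + 81 * ((2 : ℝ) ^ ((1 : ℝ) / 4)) ^ 2 := by
  have hs := two_rpow_one_fourth_pow_four
  rw [d13, two_rpow_three_fourths]
  linear_combination (36 * ((2 : ℝ) ^ ((1 : ℝ) / 4)) ^ 2 + 36) * hs

lemma c13_eq : c13 = d13 * (2 * (2 : ℝ) ^ ((1 : ℝ) / 3) - 1) / 15 := by
  have hr := two_rpow_one_third_pow_three
  rw [c13, two_rpow_two_thirds, div_eq_div_iff (by positivity) (by norm_num)]
  linear_combination -8 * d13 * hr

lemma c13_mul :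
    (1 + 2 * (2 : ℝ) ^ ((1 : ℝ) / 3) + (2 * (2 : ℝ) ^ ((1 : ℝ) / 3)) ^ 2) * c13 = d13 := by
  rw [c13, two_rpow_two_thirds]
  field_simp
  ring

lemma Y13_det : Y13.det = ((128 - d13 ^ 2 : ℝ) : ℂ) := by
  rw [Y13, Matrix.det_fin_two_of]; push_cast; ring

lemma X13_det : X13.det = ((16 * (2 : ℝ) ^ ((1 : ℝ) / 3) / 9 - c13 ^ 2 : ℝ) : ℂ) := by
  rw [X13, Matrix.det_fin_two_of]; push_cast; ring

lemma X13_trace : X13.trace = ((4 / 3 + 4 * (2 : ℝ) ^ ((1 : ℝ) / 3) / 3 : ℝ) : ℂ) := by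
  rw [X13, Matrix.trace_fin_two_of]; push_cast; ring

lemma X13_isHermitian : X13.IsHermitian := by
  ext i j
  fin_cases i <;> fin_cases j <;> simp [X13]

lemma d13_sq_gt : 128 < d13 ^ 2 := by
  have hs := two_rpow_one_fourth_pow_four
  rw [d13_sq]
  nlinarith [sq_nonneg (((2 : ℝ) ^ ((1 : ℝ) / 4)) ^ 2 - 1)]

lemma c13_sq_lt : c13 ^ 2 < 16 * (2 : ℝ) ^ ((1 : ℝ) / 3) / 9 := by
  set r := (2 : ℝ) ^ ((1 : ℝ) / 3)
  set t := ((2 : ℝ) ^ ((1 : ℝ) / 4)) ^ 2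
  have hr : r ^ 3 = 2 := two_rpow_one_third_pow_three
  have ht : t ^ 2 = 2 := by rw [← pow_mul]; exact two_rpow_one_fourth_pow_four
  have hr0 : 0 < r := by positivity
  have ht0 : 0 < t := by positivity
  have hr_lo : 1.25 < r := by nlinarith [sq_nonneg (r - 1.25), sq_nonneg r]
  have hr_hi : r < 1.3 := by nlinarith [sq_nonneg (r - 1.3), sq_nonneg r]
  have ht_hi : t < 1.42 := by nlinarith
  rw [c13_eq, div_pow, mul_pow, d13_sq]
  nlinarith [mul_lt_mul_of_pos_right ht_hi (by nlinarith : (0:ℝ) < (2 * r - 1) ^ 2)]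

/-- Remark 2.3: `Y13` is not positive semidefinite, yet `X13` solves
`A² X + A X A + X A² = Y` and is Hermitian positive definite. -/
theorem stmt_13 :
    ¬ Y13.PosSemidef ∧
    (A13 ^ 2 * X13 + A13 * X13 * A13 + X13 * A13 ^ 2 = Y13) ∧
    X13.PosDef := by
  refine ⟨fun hY => ?_, ?_, ?_⟩
  · have hdet := hY.det_nonneg
    rw [Y13_det, Complex.zero_le_real] at hdet
    linarith [d13_sq_gt]
  · ext i j
    rw [A13, Matrix.diagonal_sq_mul_add_mul_mul_add_mul_diagonal_sq_apply]
    fin_cases i <;> fin_cases j <;>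
      simp only [X13, Y13, Matrix.of_apply, Matrix.cons_val_zero, Matrix.cons_val_one,
        Matrix.cons_val_fin_one, Fin.zero_eta, Fin.mk_one] <;>
      norm_cast
    · norm_num
    · linear_combination c13_mul
    · linear_combination c13_mul
    · linear_combination 16 * two_rpow_one_third_pow_three
  · refine X13_isHermitian.posDef_of_det_pos_of_trace_pos ?_ ?_
    · rw [X13_det, Complex.zero_lt_real]; linarith [c13_sq_lt]
    · rw [X13_trace, Complex.zero_lt_real]; positivity
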